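/- arXiv:1703.01385 — 2 statements merged into one kernel-verified Lean document; each statement's English description precedes it below -/
import Mathlib

section
/- Second quotient rule for Hasse–Teichmüller derivatives: let F be a field and f ∈ F[[z]] a nonzero formal power series, with multiplicative inverse 1/f taken in the field of formal Laurent series F((z)). Then for every n ≥ 1, H^{(n)}(1/f) = Σ_{k=1}^{n} (n+1 choose k+1) ((−1)^k / f^{k+1}) Σ_{i_1,…,i_k ≥ 0, i_1+⋯+i_k = n} H^{(i_1)}(f) ⋯ H^{(i_k)}(f), where the inner sum is over all ordered k-tuples of nonnegative integers with sum n. -/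
/-!
Second quotient rule for Hasse–Teichmüller derivatives on formal Laurent series.
-/

noncomputable section

/-- The Hasse–Teichmüller derivative of order `n` on formal Laurent series:
it sends `Σ_{m ≥ R} a_m z^m` to `Σ_{m ≥ R} a_m (m choose n) z^{m-n}`, where
`(m choose n)` is the generalized (integer) binomial coefficient. -/
def hasseTeichmullerLS {F : Type*} [Field F] (n : ℕ) (f : LaurentSeries F) : LaurentSeries F where
  coeff m := ((Ring.choose (m + n : ℤ) n : ℤ) : F) * f.coeff (m + n)
  isPWO_support' := by
    refine Set.IsPWO.mono
      (f.isPWO_support.image_of_monotone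
        (f := fun x : ℤ => x - (n : ℤ)) fun a b hab => by simpa using hab) ?_
    intro m hm
    have hm' : f.coeff (m + n) ≠ 0 := by
      intro h
      simp [Function.mem_support, h] at hm
    exact ⟨m + n, hm', by ring⟩

namespace HTaux

variable {F : Type*} [Field F]

lemma coeff_H (n : ℕ) (f : LaurentSeries F) (m : ℤ) :
    (hasseTeichmullerLS n f).coeff m
      = ((Ring.choose (m + n : ℤ) n : ℤ) : F) * f.coeff (m + n) := rfl

lemma H_zero (f : LaurentSeries F) : hasseTeichmullerLS 0 f = f := by
  ext m; simp [coeff_H, Ring.choose_zero_right]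

lemma H_one (n : ℕ) (hn : n ≠ 0) : hasseTeichmullerLS n (1 : LaurentSeries F) = 0 := by
  ext m
  rw [coeff_H]
  by_cases h : (m + n : ℤ) = 0
  · rw [h]
    rw [show ((0:ℤ)) = ((0:ℕ):ℤ) by norm_num, Ring.choose_natCast]
    simp [Nat.choose_eq_zero_of_lt (Nat.pos_of_ne_zero hn)]
  · simp [HahnSeries.coeff_one, h]

lemma H_support_subset (n : ℕ) (f : LaurentSeries F) :
    (hasseTeichmullerLS n f).support ⊆ (fun x : ℤ => x - (n:ℤ)) '' f.support := by
  intro m hm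
  have hm' : f.coeff (m + n) ≠ 0 := by
    intro h
    apply hm
    rw [coeff_H, h, mul_zero]
  exact ⟨m + n, hm', by ring⟩

lemma image_isPWO (n : ℕ) (f : LaurentSeries F) :
    ((fun x : ℤ => x - (n:ℤ)) '' f.support).IsPWO :=
  f.isPWO_support.image_of_monotone fun a b hab => by simpa using hab

lemma mul_coeff_both {x y : LaurentSeries F} {a : ℤ} {s t : Set ℤ}
    (hs : s.IsPWO) (ht : t.IsPWO) (hxs : x.support ⊆ s) (hyt : y.support ⊆ t) :
    (x*y).coeff a = ∑ ij ∈ Finset.addAntidiagonal hs ht a, x.coeff ij.1 * y.coeff ij.2 := by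
  rw [HahnSeries.coeff_mul_left' hs hxs]
  refine Finset.sum_subset (Finset.addAntidiagonal_mono_right hyt) ?_
  intro ij hij hij'
  have h1 := Finset.mem_addAntidiagonal.mp hij
  have : y.coeff ij.2 = 0 := by
    by_contra h
    exact hij' (Finset.mem_addAntidiagonal.mpr ⟨h1.1, h, h1.2.2⟩)
  simp [this]



open Finset in
lemma H_mul (n : ℕ) (x y : LaurentSeries F) :
    hasseTeichmullerLS n (x*y)
      = ∑ p ∈ Finset.HasAntidiagonal.antidiagonal n, hasseTeichmullerLS p.1 x * hasseTeichmullerLS p.2 y := by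
  ext m
  rw [show (∑ p ∈ Finset.HasAntidiagonal.antidiagonal n, hasseTeichmullerLS p.1 x * hasseTeichmullerLS p.2 y).coeff m = ∑ p ∈ Finset.HasAntidiagonal.antidiagonal n, (hasseTeichmullerLS p.1 x * hasseTeichmullerLS p.2 y).coeff m from map_sum (HahnSeries.coeff.addMonoidHom m) _ _]
  have hrw : ∀ p ∈ Finset.HasAntidiagonal.antidiagonal n,
      (hasseTeichmullerLS p.1 x * hasseTeichmullerLS p.2 y).coeff m
        = ∑ ij ∈ Finset.addAntidiagonal x.isPWO_support y.isPWO_support (m + n),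
            ((Ring.choose ij.1 p.1 : ℤ) : F) * ((Ring.choose ij.2 p.2 : ℤ) : F)
              * (x.coeff ij.1 * y.coeff ij.2) := by
    intro p hp
    have hpn : (p.1 : ℤ) + (p.2 : ℤ) = (n : ℤ) := by
      have := Finset.HasAntidiagonal.mem_antidiagonal.mp hp
      push_cast [← this]; ring
    rw [mul_coeff_both (image_isPWO p.1 x) (image_isPWO p.2 y)
      (H_support_subset p.1 x) (H_support_subset p.2 y)]
    refine Finset.sum_nbij' (i := fun ij => (ij.1 + p.1, ij.2 + p.2))
      (j := fun ij => (ij.1 - p.1, ij.2 - p.2)) ?_ ?_ ?_ ?_ ?_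
    · intro ij hij
      obtain ⟨h1, h2, h3⟩ := Finset.mem_addAntidiagonal.mp hij
      obtain ⟨a, ha, ha2⟩ := h1
      obtain ⟨b, hb, hb2⟩ := h2
      simp only at ha2 hb2
      refine Finset.mem_addAntidiagonal.mpr ⟨?_, ?_, ?_⟩
      · simpa [show ij.1 + (p.1:ℤ) = a by omega] using ha
      · simpa [show ij.2 + (p.2:ℤ) = b by omega] using hb
      · dsimp only; omega
    · intro ij hij
      obtain ⟨h1, h2, h3⟩ := Finset.mem_addAntidiagonal.mp hij
      refine Finset.mem_addAntidiagonal.mpr ⟨⟨ij.1, h1, rfl⟩, ⟨ij.2, h2, rfl⟩, ?_⟩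
      dsimp only
      omega
    · intro ij _; simp
    · intro ij _; simp
    · intro ij hij
      rw [coeff_H, coeff_H]
      simp only [sub_add_cancel]
      ring
  rw [Finset.sum_congr rfl hrw, Finset.sum_comm]
  rw [coeff_H, HahnSeries.coeff_mul, Finset.mul_sum]
  refine Finset.sum_congr rfl ?_
  intro ij hij
  obtain ⟨h1, h2, h3⟩ := Finset.mem_addAntidiagonal.mp hij
  have hvdm : Ring.choose (m + (n:ℤ)) n
      = ∑ p ∈ Finset.HasAntidiagonal.antidiagonal n, Ring.choose ij.1 p.1 * Ring.choose ij.2 p.2 := by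
    rw [← h3]
    exact Ring.add_choose_eq n (Commute.all _ _)
  rw [h3] at *
  rw [hvdm]
  push_cast
  rw [Finset.sum_mul]


def D (f : LaurentSeries F) : PowerSeries (LaurentSeries F) :=
  PowerSeries.mk fun n => hasseTeichmullerLS n f

@[simp] lemma coeff_D (n : ℕ) (f : LaurentSeries F) :
    (PowerSeries.coeff n) (D f) = hasseTeichmullerLS n f := PowerSeries.coeff_mk _ _

lemma D_mul (x y : LaurentSeries F) : D (x*y) = D x * D y := by
  refine PowerSeries.ext fun n => ?_
  rw [PowerSeries.coeff_mul, coeff_D, H_mul]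
  exact Finset.sum_congr rfl fun p _ => by rw [coeff_D, coeff_D]

lemma D_one : D (1 : LaurentSeries F) = 1 := by
  ext n
  rw [coeff_D, PowerSeries.coeff_one]
  rcases n with _ | n
  · simp [H_zero]
  · simp [H_one (n+1) (Nat.succ_ne_zero n)]

lemma sum_antidiagonalTuple_succ {M : Type*} [AddCommMonoid M] {k n : ℕ}
    (g : (Fin (k+1) → ℕ) → M) :
    ∑ x ∈ Finset.Nat.antidiagonalTuple (k+1) n, g x
      = ∑ p ∈ Finset.HasAntidiagonal.antidiagonal n, ∑ x ∈ Finset.Nat.antidiagonalTuple k p.2,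
          g (Fin.cons p.1 x) := by
  rw [← Finset.sum_sigma (Finset.HasAntidiagonal.antidiagonal n)
      (fun p => Finset.Nat.antidiagonalTuple k p.2) (fun q => g (Fin.cons q.1.1 q.2))]
  refine (Finset.sum_nbij' (i := fun (q : (_ : ℕ × ℕ) × (Fin k → ℕ)) => Fin.cons q.1.1 q.2)
    (j := fun (x : Fin (k+1) → ℕ) =>
      (⟨(x 0, ∑ i : Fin k, x i.succ), fun i : Fin k => x i.succ⟩ : (_ : ℕ × ℕ) × (Fin k → ℕ))) ?_ ?_ ?_ ?_ ?_).symm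
  · intro q hq
    obtain ⟨hq1, hq2⟩ := Finset.mem_sigma.mp hq
    rw [Finset.Nat.mem_antidiagonalTuple, Fin.sum_cons,
      Finset.Nat.mem_antidiagonalTuple.mp hq2]
    exact Finset.HasAntidiagonal.mem_antidiagonal.mp hq1
  · intro x hx
    refine Finset.mem_sigma.mpr ⟨Finset.HasAntidiagonal.mem_antidiagonal.mpr ?_,
      Finset.Nat.mem_antidiagonalTuple.mpr rfl⟩
    rw [← Finset.Nat.mem_antidiagonalTuple.mp hx, Fin.sum_univ_succ]
  · intro q hq
    obtain ⟨hq1, hq2⟩ := Finset.mem_sigma.mp hq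
    obtain ⟨⟨a, b⟩, x⟩ := q
    have h2 : ∑ i, x i = b := Finset.Nat.mem_antidiagonalTuple.mp hq2
    subst h2
    simp only [Fin.cons_zero, Fin.cons_succ]
  · intro x hx
    exact Fin.cons_self_tail x
  · intro q hq; rfl

lemma coeff_D_pow (f : LaurentSeries F) (k n : ℕ) :
    (PowerSeries.coeff n) (D f ^ k)
      = ∑ i ∈ Finset.Nat.antidiagonalTuple k n, ∏ j, hasseTeichmullerLS (i j) f := by
  induction k generalizing n with
  | zero =>
    rcases n with _ | n
    · simp [Finset.Nat.antidiagonalTuple_zero_zero]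
    · simp [Finset.Nat.antidiagonalTuple_zero_succ]
  | succ k ih =>
    rw [pow_succ', PowerSeries.coeff_mul, sum_antidiagonalTuple_succ]
    refine Finset.sum_congr rfl fun p _ => ?_
    rw [coeff_D, ih p.2, Finset.mul_sum]
    refine Finset.sum_congr rfl fun x _ => ?_
    rw [Fin.prod_univ_succ]
    simp

end HTaux

open HTaux

/-- second quotient rule.  For a nonzero power series `f` over a field `F`,
whose inverse is taken in the field of formal Laurent series, and `n ≥ 1`,
`H^{(n)}(1/f) = Σ_{k=1}^{n} (n+1 choose k+1) ((−1)^k / f^{k+1})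
  Σ_{i_1,…,i_k ≥ 0, i_1+⋯+i_k = n} H^{(i_1)}(f) ⋯ H^{(i_k)}(f)`. -/
theorem hasseTeichmuller_inv' {F : Type*} [Field F] (f : PowerSeries F) (hf : f ≠ 0)
    (n : ℕ) (hn : 1 ≤ n) :
    hasseTeichmullerLS n ((f : LaurentSeries F)⁻¹) =
      ∑ k ∈ Finset.Icc 1 n, ((n + 1).choose (k + 1) : LaurentSeries F) *
        ((-1) ^ k / (f : LaurentSeries F) ^ (k + 1)) *
        ∑ i ∈ Finset.Nat.antidiagonalTuple k n,
          ∏ j, hasseTeichmullerLS (i j) (f : LaurentSeries F) := by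
  classical
  set c : LaurentSeries F := (f : LaurentSeries F) with hcdef
  have hc : c ≠ 0 := by
    intro h
    exact hf (HahnSeries.ofPowerSeries_injective (h.trans (map_zero _).symm))
  set P : PowerSeries (LaurentSeries F) := D c with hP
  set Q : PowerSeries (LaurentSeries F) := D c⁻¹ with hQ
  have hPQ : P * Q = 1 := by
    rw [hP, hQ, ← D_mul, mul_inv_cancel₀ hc, D_one]
  have hPk : ∀ k : ℕ, P ^ (k+1) * Q = P ^ k := fun k => by
    rw [pow_succ, mul_assoc, hPQ, mul_one]
  have hexp : (PowerSeries.C c - P) ^ (n+1)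
      = (∑ k ∈ Finset.range (n+1),
          (-P)^(k+1) * (PowerSeries.C c)^(n-k)
            * ((n+1).choose (k+1) : PowerSeries (LaurentSeries F)))
        + (PowerSeries.C c)^(n+1) := by
    rw [sub_eq_add_neg, add_comm (PowerSeries.C c) (-P), add_pow,
      Finset.sum_range_succ']
    refine congrArg₂ (· + ·) (Finset.sum_congr rfl fun k hk => ?_) (by simp)
    rw [Nat.succ_sub_succ n k]
  have key : (PowerSeries.C c)^(n+1) * Q
      = (PowerSeries.C c - P) ^ (n+1) * Q
        + ∑ k ∈ Finset.range (n+1),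
            ((n+1).choose (k+1) : PowerSeries (LaurentSeries F)) * (-1)^k
              * (PowerSeries.C c)^(n-k) * P^k := by
    have hterm : ∀ k ∈ Finset.range (n+1),
        (-P)^(k+1) * (PowerSeries.C c)^(n-k)
            * ((n+1).choose (k+1) : PowerSeries (LaurentSeries F)) * Q
          = -(((n+1).choose (k+1) : PowerSeries (LaurentSeries F)) * (-1)^k
              * (PowerSeries.C c)^(n-k) * P^k) := by
      intro k hk
      calc (-P)^(k+1) * (PowerSeries.C c)^(n-k)
            * ((n+1).choose (k+1) : PowerSeries (LaurentSeries F)) * Q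
          = (-1)^(k+1) * ((n+1).choose (k+1) : PowerSeries (LaurentSeries F))
            * (PowerSeries.C c)^(n-k) * (P^(k+1) * Q) := by
            ring
        _ = -(((n+1).choose (k+1) : PowerSeries (LaurentSeries F)) * (-1)^k
              * (PowerSeries.C c)^(n-k) * P^k) := by
            rw [hPk k, pow_succ]; ring
    rw [hexp, add_mul, Finset.sum_mul, Finset.sum_congr rfl hterm, Finset.sum_neg_distrib]
    ring
  have hconstP : PowerSeries.constantCoeff P = c := by
    rw [← PowerSeries.coeff_zero_eq_constantCoeff_apply, hP, coeff_D, H_zero]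
  have hcoeffA : (PowerSeries.coeff n)
      ((PowerSeries.C c - P) ^ (n+1) * Q) = 0 := by
    have hXdvd : (PowerSeries.X : PowerSeries (LaurentSeries F))
        ∣ (PowerSeries.C c - P) := by
      rw [PowerSeries.X_dvd_iff, map_sub, hconstP, PowerSeries.constantCoeff_C, sub_self]
    have hdvd : (PowerSeries.X : PowerSeries (LaurentSeries F))^(n+1)
        ∣ (PowerSeries.C c - P)^(n+1) * Q :=
      dvd_mul_of_dvd_left (pow_dvd_pow_of_dvd hXdvd _) _
    exact (PowerSeries.X_pow_dvd_iff.mp hdvd) n (Nat.lt_succ_self n)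
  have hkey2 : c^(n+1) * hasseTeichmullerLS n c⁻¹
      = ∑ k ∈ Finset.range (n+1),
          ((n+1).choose (k+1) : LaurentSeries F) * (-1)^k * c^(n-k)
            * ∑ i ∈ Finset.Nat.antidiagonalTuple k n,
                ∏ j, hasseTeichmullerLS (i j) c := by
    have hck := congrArg (PowerSeries.coeff n) key
    rw [map_add, hcoeffA, zero_add, map_sum] at hck
    rw [← map_pow, PowerSeries.coeff_C_mul, hQ, coeff_D] at hck
    rw [hck]
    refine Finset.sum_congr rfl fun k hk => ?_
    have hCeq : ((n+1).choose (k+1) : PowerSeries (LaurentSeries F)) * (-1)^k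
        * (PowerSeries.C c)^(n-k)
        = PowerSeries.C
            (((n+1).choose (k+1) : LaurentSeries F) * (-1)^k * c^(n-k)) := by
      rw [map_mul, map_mul, map_pow, map_natCast, map_pow, map_neg, map_one]
    rw [hCeq, PowerSeries.coeff_C_mul, coeff_D_pow]
  have hsub : Finset.Icc 1 n ⊆ Finset.range (n+1) := by
    intro k hk
    obtain ⟨h1, h2⟩ := Finset.mem_Icc.mp hk
    exact Finset.mem_range.mpr (by omega)
  have hzero : ∀ k ∈ Finset.range (n+1), k ∉ Finset.Icc 1 n →
      ((n+1).choose (k+1) : LaurentSeries F) * (-1)^k * c^(n-k)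
        * (∑ i ∈ Finset.Nat.antidiagonalTuple k n,
            ∏ j, hasseTeichmullerLS (i j) c) = 0 := by
    intro k hk hk'
    have hk0 : k = 0 := by
      have := Finset.mem_range.mp hk
      simp only [Finset.mem_Icc] at hk'
      omega
    subst hk0
    obtain ⟨m, rfl⟩ : ∃ m, n = m + 1 := ⟨n - 1, by omega⟩
    rw [Finset.Nat.antidiagonalTuple_zero_succ, Finset.sum_empty, mul_zero]
  rw [← Finset.sum_subset hsub hzero] at hkey2
  apply mul_left_cancel₀ (pow_ne_zero (n+1) hc)
  rw [hkey2, Finset.mul_sum]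
  refine Finset.sum_congr rfl fun k hk => ?_
  obtain ⟨hk1, hk2⟩ := Finset.mem_Icc.mp hk
  have hsplit : c^(n+1) = c^(k+1) * c^(n-k) := by
    rw [← pow_add]
    congr 1
    omega
  have hck : c^(k+1) ≠ 0 := pow_ne_zero _ hc
  rw [hsplit]
  field_simp


end
end

section
/- Binomial-coefficient formula for truncated Bernoulli–Carlitz numbers: for every integer N ≥ 0 and every n ≥ 1, BC_{N,n} = Π(n) Σ_{k=1}^{n} (n+1 choose k+1) (−D_N)^k Σ_{i_1,…,i_k ≥ 0, r^{N+i_1}+⋯+r^{N+i_k} = n + k r^N} 1/(D_{N+i_1} ⋯ D_{N+i_k}), where the inner sum is over all ordered k-tuples of nonnegative integers (i_1,…,i_k) with r^{N+i_1}+⋯+r^{N+i_k} = n + k r^N. -/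
/-!
Carlitz module: `Fq` is a finite field with `r = Fintype.card Fq` elements (so `r` is a
power of a prime `p`), and `K = Fq(T)` is the field of rational functions over `Fq`.
-/

noncomputable section

variable (Fq : Type*) [Field Fq] [Fintype Fq]

/-- `r`, the number of elements of the finite field `Fq` (a prime power). -/
def rq : ℕ := Fintype.card Fq

/-- `[i] = T^{r^i} − T` in `K = Fq(T)`. -/
def carlitzBracket (i : ℕ) : RatFunc Fq := RatFunc.X ^ rq Fq ^ i - RatFunc.X

/-- `D_0 = 1`, `D_i = [i]·D_{i−1}^r`. -/
def carlitzD : ℕ → RatFunc Fq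
  | 0 => 1
  | i + 1 => carlitzBracket Fq (i + 1) * carlitzD i ^ rq Fq

/-- `L_0 = 1`, `L_i = [i]·L_{i−1}`. -/
def carlitzL : ℕ → RatFunc Fq
  | 0 => 1
  | i + 1 => carlitzBracket Fq (i + 1) * carlitzL i

/-- The Carlitz factorial `Π(i) = ∏_j D_j^{c_j}`, where `i = Σ_j c_j r^j` with
`0 ≤ c_j < r` is the base-`r` expansion of `i`. -/
def carlitzPi (i : ℕ) : RatFunc Fq :=
  ∏ j ∈ Finset.range (i + 1), carlitzD Fq j ^ (Nat.digits (rq Fq) i).getD j 0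

/-- The power series `Σ_{j=0}^∞ (D_N/D_{N+j}) x^{r^{N+j} − r^N}`, i.e.
`(e_C(x) − Σ_{i=0}^{N−1} x^{r^i}/D_i)·D_N/x^{r^N}`; it has constant term `1`. -/
def bcSeries (N : ℕ) : PowerSeries (RatFunc Fq) :=
  PowerSeries.mk fun m => ∑ j ∈ Finset.range (m + 1),
    if m = rq Fq ^ (N + j) - rq Fq ^ N then carlitzD Fq N / carlitzD Fq (N + j) else 0

/-- The truncated Bernoulli–Carlitz number `BC_{N,n}`: `BC_{N,n}/Π(n)` is the `n`-th
coefficient of the multiplicative inverse of the power series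
`Σ_{j=0}^∞ (D_N/D_{N+j}) x^{r^{N+j} − r^N}`. -/
def truncBC (N n : ℕ) : RatFunc Fq :=
  carlitzPi Fq n * PowerSeries.coeff n (bcSeries Fq N)⁻¹

/-- The power series `Σ_{j=0}^∞ (−1)^j (L_N/L_{N+j}) x^{r^{N+j} − r^N}`, i.e.
`(log_C(x) − Σ_{i=0}^{N−1} (−1)^i x^{r^i}/L_i)·(−1)^N L_N/x^{r^N}`;
it has constant term `1`. -/
def ccSeries (N : ℕ) : PowerSeries (RatFunc Fq) :=
  PowerSeries.mk fun m => ∑ j ∈ Finset.range (m + 1),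
    if m = rq Fq ^ (N + j) - rq Fq ^ N then
      (-1) ^ j * carlitzL Fq N / carlitzL Fq (N + j) else 0

/-- The truncated Cauchy–Carlitz number `CC_{N,n}`: `CC_{N,n}/Π(n)` is the `n`-th
coefficient of the multiplicative inverse of the power series
`Σ_{j=0}^∞ (−1)^j (L_N/L_{N+j}) x^{r^{N+j} − r^N}`. -/
def truncCC (N n : ℕ) : RatFunc Fq :=
  carlitzPi Fq n * PowerSeries.coeff n (ccSeries Fq N)⁻¹

/-- The tail `e_C(z) − 𝓔_{N−1}(z) = Σ_{i=N}^∞ z^{r^i}/D_i` of the Carlitz exponential. -/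
def carlitzExpTail (N : ℕ) : PowerSeries (RatFunc Fq) :=
  PowerSeries.mk fun m => ∑ j ∈ Finset.range (m + 1),
    if m = rq Fq ^ (N + j) then (carlitzD Fq (N + j))⁻¹ else 0

/-- The associated Stirling–Carlitz number of the second kind `{n brace k}_{C,≥N}`,
defined by `(e_C(z) − 𝓔_{N−1}(z))^k/Π(k) = Σ_n {n brace k}_{C,≥N} z^n/Π(n)`. -/
def stirling2C (N k n : ℕ) : RatFunc Fq :=
  carlitzPi Fq n / carlitzPi Fq k * PowerSeries.coeff n (carlitzExpTail Fq N ^ k)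

/-- The tail `log_C(z) − 𝓕_{N−1}(z) = Σ_{i=N}^∞ (−1)^i z^{r^i}/L_i` of the Carlitz
logarithm. -/
def carlitzLogTail (N : ℕ) : PowerSeries (RatFunc Fq) :=
  PowerSeries.mk fun m => ∑ j ∈ Finset.range (m + 1),
    if m = rq Fq ^ (N + j) then (-1) ^ (N + j) * (carlitzL Fq (N + j))⁻¹ else 0

/-- The associated Stirling–Carlitz number of the first kind `{n brack k}_{C,≥N}`,
defined by `(log_C(z) − 𝓕_{N−1}(z))^k/Π(k) = Σ_n {n brack k}_{C,≥N} z^n/Π(n)`. -/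
def stirling1C (N k n : ℕ) : RatFunc Fq :=
  carlitzPi Fq n / carlitzPi Fq k * PowerSeries.coeff n (carlitzLogTail Fq N ^ k)

/-!
Write `f` for `bcSeries Fq N`, a power series with constant term `1`. Multiplying
`∑_{k=0}^{n} (-1)^k C(n+1,k+1) f^k` by `f` gives `1 - (1 - f)^{n+1}`, and `x^{n+1}` divides
`(1 - f)^{n+1}`; hence this sum agrees with `f⁻¹` up to degree `n`, and its `k = 0` term does not
contribute in degree `n ≥ 1`. Since `f` is supported on the exponents `r^{N+i} - r^N`, the `n`-th
coefficient of `f^k` is the sum, over the `k`-tuples `(i_j)` with `∑ (r^{N+i_j} - r^N) = n`, of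
`∏ D_N / D_{N+i_j}`.
-/

open Finset PowerSeries

theorem sum_neg_one_pow_mul_choose_mul_pow_mul_self {R : Type*} [CommRing R] (f : R) (n : ℕ) :
    (∑ i ∈ range (n + 1), (-1) ^ i * ((n + 1).choose (i + 1) : R) * f ^ i) * f =
      1 - (1 - f) ^ (n + 1) := by
  rw [sub_eq_neg_add 1 f, add_pow,
    sum_range_succ' (fun m => (-f) ^ m * 1 ^ (n + 1 - m) * ((n + 1).choose m : R)), sum_mul]
  simp only [one_pow, mul_one, pow_zero, Nat.choose_zero_right, Nat.cast_one]
  rw [sub_add_cancel_right, ← sum_neg_distrib]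
  exact sum_congr rfl fun i _ => by ring

namespace PowerSeries

theorem coeff_inv_eq_sum_choose_mul_coeff_pow {k : Type*} [Field k] {f : k⟦X⟧}
    (hf : constantCoeff f = 1) {n : ℕ} (hn : 1 ≤ n) :
    coeff n f⁻¹ = ∑ i ∈ Icc 1 n, (-1) ^ i * ((n + 1).choose (i + 1) : k) * coeff n (f ^ i) := by
  have hX : X ^ (n + 1) ∣ f⁻¹ * (1 - f) ^ (n + 1) :=
    (pow_dvd_pow_of_dvd (X_dvd_iff.2 (by simp [hf])) _).mul_left _
  have hsum : ∑ i ∈ range (n + 1), (-1) ^ i * ((n + 1).choose (i + 1) : k⟦X⟧) * f ^ i =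
      f⁻¹ - f⁻¹ * (1 - f) ^ (n + 1) := by
    rw [← mul_one_sub, ← sum_neg_one_pow_mul_choose_mul_pow_mul_self, mul_comm, mul_assoc,
      PowerSeries.mul_inv_cancel _ (by simp [hf]), mul_one]
  have hcoeff := congrArg (coeff n) hsum
  rw [map_sub, X_pow_dvd_iff.1 hX n (by omega), sub_zero] at hcoeff
  have hC : ∀ i, (-1) ^ i * ((n + 1).choose (i + 1) : k⟦X⟧) =
      C ((-1) ^ i * ((n + 1).choose (i + 1) : k)) := by simp
  simp_rw [← hcoeff, hC, map_sum, coeff_C_mul]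
  rw [range_eq_Ico, sum_eq_sum_Ico_succ_bot (by omega), Ico_add_one_right_eq_Icc,
    pow_zero f, coeff_one, if_neg (by omega), mul_zero, zero_add]

variable {R : Type*} [CommSemiring R]

theorem coeff_pow_eq_finsum (f : R⟦X⟧) (k n : ℕ) :
    coeff n (f ^ k) = ∑ᶠ (m : Fin k → ℕ) (_ : ∑ j, m j = n), ∏ j, coeff (m j) f := by
  classical
  rw [← Fin.prod_const, coeff_prod, finsum_cond_eq_sum_of_cond_iff _
    (t := Nat.antidiagonalTuple k n) (by simp [Nat.mem_antidiagonalTuple])]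
  exact sum_equiv Finsupp.equivFunOnFinite (by simp [Nat.mem_antidiagonalTuple]) (by simp)

theorem coeff_pow_eq_finsum_of_supported_on_range {e : ℕ → ℕ} (he : Function.Injective e) {f : R⟦X⟧}
    (hf : ∀ m ∉ Set.range e, coeff m f = 0) (k n : ℕ) :
    coeff n (f ^ k) =
      ∑ᶠ (i : Fin k → ℕ) (_ : ∑ j, e (i j) = n), ∏ j, coeff (e (i j)) f := by
  set F : (Fin k → ℕ) → R := fun m => ∏ j, coeff (m j) f
  set S : Set (Fin k → ℕ) := {i | ∑ j, e (i j) = n}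
  calc coeff n (f ^ k) = ∑ᶠ m ∈ {m : Fin k → ℕ | ∑ j, m j = n}, F m := coeff_pow_eq_finsum f k n
    _ = ∑ᶠ m ∈ (e ∘ ·) '' S, F m := by
      refine finsum_mem_inter_support_eq _ _ _ (Set.ext fun m => ⟨?_, ?_⟩)
      · rintro ⟨hm, hne⟩
        have : ∀ j, m j ∈ Set.range e := fun j => by
          by_contra h
          exact hne (prod_eq_zero (mem_univ j) (hf _ h))
        choose i hi using this
        refine ⟨⟨i, ?_, funext hi⟩, hne⟩
        simpa [S, hi] using hm
      · rintro ⟨⟨i, hi, rfl⟩, hne⟩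
        exact ⟨hi, hne⟩
    _ = ∑ᶠ i ∈ S, F (e ∘ i) := finsum_mem_image he.comp_left.injOn

end PowerSeries

theorem one_lt_rq : 1 < rq Fq := Fintype.one_lt_card

theorem carlitzBracket_ne_zero {i : ℕ} (hi : i ≠ 0) : carlitzBracket Fq i ≠ 0 := by
  rw [carlitzBracket, sub_ne_zero, ← RatFunc.algebraMap_X, ← map_pow,
    (RatFunc.algebraMap_injective Fq).ne_iff]
  intro h
  have := congrArg Polynomial.natDegree h
  rw [Polynomial.natDegree_X_pow, Polynomial.natDegree_X] at this
  exact (Nat.one_lt_pow hi (one_lt_rq Fq)).ne' this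

theorem carlitzD_ne_zero (i : ℕ) : carlitzD Fq i ≠ 0 := by
  induction i with
  | zero => exact one_ne_zero
  | succ i ih => exact mul_ne_zero (carlitzBracket_ne_zero Fq i.succ_ne_zero) (pow_ne_zero _ ih)

def bcExponent (N j : ℕ) : ℕ := rq Fq ^ (N + j) - rq Fq ^ N

theorem bcExponent_add_rq_pow (N j : ℕ) : bcExponent Fq N j + rq Fq ^ N = rq Fq ^ (N + j) :=
  Nat.sub_add_cancel (Nat.pow_le_pow_right (one_lt_rq Fq).le (Nat.le_add_right N j))

theorem bcExponent_strictMono (N : ℕ) : StrictMono (bcExponent Fq N) := fun a b hab => by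
  have := Nat.pow_lt_pow_right (one_lt_rq Fq) (Nat.add_lt_add_left hab N)
  have := bcExponent_add_rq_pow Fq N a
  have := bcExponent_add_rq_pow Fq N b
  omega

theorem le_bcExponent (N j : ℕ) : j ≤ bcExponent Fq N j := by
  have h1 : j + 1 ≤ rq Fq ^ j := Nat.lt_pow_self (one_lt_rq Fq)
  have h2 : 1 ≤ rq Fq ^ N := Nat.one_le_pow _ _ (Nat.zero_lt_of_lt (one_lt_rq Fq))
  suffices j + rq Fq ^ N ≤ rq Fq ^ N * rq Fq ^ j by rw [bcExponent, pow_add]; omega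
  nlinarith

theorem coeff_bcExponent_bcSeries (N j : ℕ) :
    coeff (bcExponent Fq N j) (bcSeries Fq N) = carlitzD Fq N / carlitzD Fq (N + j) := by
  rw [bcSeries, coeff_mk]
  refine (sum_eq_single_of_mem j (mem_range.2 (Nat.lt_succ_of_le (le_bcExponent Fq N j)))
    fun i _ hij => if_neg ((bcExponent_strictMono Fq N).injective.ne hij).symm).trans (if_pos rfl)

theorem coeff_bcSeries_of_notMem_range {N m : ℕ} (hm : m ∉ Set.range (bcExponent Fq N)) :
    coeff m (bcSeries Fq N) = 0 := by
  rw [bcSeries, coeff_mk]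
  exact sum_eq_zero fun j _ => if_neg fun h => hm ⟨j, h.symm⟩

theorem constantCoeff_bcSeries (N : ℕ) : constantCoeff (bcSeries Fq N) = 1 := by
  have h := coeff_bcExponent_bcSeries Fq N 0
  rw [bcExponent, add_zero, Nat.sub_self, coeff_zero_eq_constantCoeff_apply] at h
  rw [h, div_self (carlitzD_ne_zero Fq N)]

theorem sum_rq_pow_eq_iff {N n k : ℕ} (i : Fin k → ℕ) :
    ∑ j, rq Fq ^ (N + i j) = n + k * rq Fq ^ N ↔ ∑ j, bcExponent Fq N (i j) = n := by
  simp only [← bcExponent_add_rq_pow, sum_add_distrib, sum_const, card_univ, Fintype.card_fin,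
    smul_eq_mul, Nat.add_right_cancel_iff]

theorem coeff_bcSeries_pow (N n k : ℕ) :
    coeff n (bcSeries Fq N ^ k) = carlitzD Fq N ^ k *
      ∑ᶠ (i : Fin k → ℕ) (_ : ∑ j, rq Fq ^ (N + i j) = n + k * rq Fq ^ N),
        ∏ j, (carlitzD Fq (N + i j))⁻¹ := by
  rw [coeff_pow_eq_finsum_of_supported_on_range (bcExponent_strictMono Fq N).injective
    (fun m => coeff_bcSeries_of_notMem_range Fq), mul_finsum]
  refine finsum_congr fun i => ?_
  rw [sum_rq_pow_eq_iff Fq, finsum_eq_if, finsum_eq_if, mul_ite, mul_zero]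
  simp only [coeff_bcExponent_bcSeries, div_eq_mul_inv, prod_mul_distrib, prod_const, card_univ,
    Fintype.card_fin]

/-- binomial-coefficient formula for the truncated Bernoulli–Carlitz
numbers. -/
theorem truncBC_explicit_binom (N n : ℕ) (hn : 1 ≤ n) :
    truncBC Fq N n =
      carlitzPi Fq n * ∑ k ∈ Finset.Icc 1 n,
        ((n + 1).choose (k + 1) : RatFunc Fq) * (-carlitzD Fq N) ^ k *
          ∑ᶠ (i : Fin k → ℕ) (_ : ∑ j, rq Fq ^ (N + i j) = n + k * rq Fq ^ N),
            ∏ j, (carlitzD Fq (N + i j))⁻¹ := by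
  rw [truncBC, coeff_inv_eq_sum_choose_mul_coeff_pow (constantCoeff_bcSeries Fq N) hn]
  congr 1
  refine sum_congr rfl fun k _ => ?_
  rw [coeff_bcSeries_pow, neg_pow]
  ring

end
end
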